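/- Under Assumption 5, let L ⊆ A be an S-hereditary additive subgroup. Let d ∈ S, let b₁, …, b_n ∈ S with b_k ≲ d for all k ≤ n, let a₁, …, a_n ∈ S with a_k ≲ b_k for all k ≤ n, and let 1 ≤ m ≤ n. Then there exists c ∈ S such that: every f ∈ S satisfying f ≲ a_k for all k ≤ m and f ⊥ b_k for all m < k ≤ n also satisfies f ≲ c; and c ≲ b_k for all k ≤ m and c ⊥ a_k for all m < k ≤ n. -/

import Mathlib

open scoped Pointwise ENNReal

/-- `B_Σ`: the set of finite sums `p₁ + ⋯ + p_k` (`k ≥ 1`) with each `pᵢ = bᵢbᵢ*`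
for some `bᵢ ∈ B`. -/
def starSums {A : Type*} [NonUnitalRing A] [StarRing A] (B : Set A) : Set A :=
  {x | ∃ (n : ℕ) (f : Fin (n + 1) → A), (∀ i, f i ∈ B) ∧ x = ∑ i, f i * star (f i)}

/-- `⌈a⌉ = sup_b inf {m/n : m(bb*) − n(bab*) ∈ A_Σ}` computed in `[0,∞]`. -/
noncomputable def ceil' {A : Type*} [NonUnitalRing A] [StarRing A] (a : A) : ℝ≥0∞ :=
  ⨆ b : A, sInf {q : ℝ≥0∞ | ∃ m n : ℕ, 0 < m ∧ 0 < n ∧ q = (m : ℝ≥0∞) / (n : ℝ≥0∞) ∧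
    m • (b * star b) - n • (b * a * star b) ∈ starSums (Set.univ : Set A)}

/-- `‖a‖ = √(max(⌈aa*⌉, ⌈a*a⌉))` computed in `[0,∞]`. -/
noncomputable def rnorm' {A : Type*} [NonUnitalRing A] [StarRing A] (a : A) : ℝ≥0∞ :=
  (max (ceil' (a * star a)) (ceil' (star a * a))) ^ (1 / 2 : ℝ)

/-- The order `a ≤ b ⇔ ⌈a − b⌉ = 0`. -/
def cle {A : Type*} [NonUnitalRing A] [StarRing A] (a b : A) : Prop :=
  ceil' (a - b) = 0

variable {A : Type*} [NonUnitalRing A] [StarRing A]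

/-- *-domination: `a ≲ b` iff `ab* ∈ E` and `a = ab*b`. -/
def Sdom (E : Set A) (a b : A) : Prop := a * star b ∈ E ∧ a = a * star b * b

/-- Assumption 5: `(S, E)` is a Weyl *-semigroup lying in the unit ball of an
Archimedean, infinitesimal-free, proper *-ring `A`. -/
structure Ass5 (S E : Set A) : Prop where
  mulS : ∀ a ∈ S, ∀ b ∈ S, a * b ∈ S
  starS : ∀ a ∈ S, star a ∈ S
  ES : E ⊆ S
  mulE : ∀ a ∈ E, ∀ b ∈ E, a * b ∈ E
  starE : star '' E = E
  normal : ∀ a ∈ S, ∀ e ∈ E, star a * e * a ∈ E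
  sqE : ∀ a ∈ S, star a * a ∈ E
  central : ∀ a ∈ S, ∀ e ∈ E, star a * a * e = e * (star a * a)
  ball : ∀ a ∈ S, rnorm' a ≤ 1
  arch : ∀ a : A, ceil' (-a) = 0 → ceil' a ≠ ⊤
  infFree : ∀ a : A, ceil' a = 0 → ceil' (-a) = 0 → a = 0
  proper : ∀ a : A, a * star a = 0 → a = 0


/-!
Put `X k = (a_k d*)* (a_k d*)` and `w k = (b_k d*)* (b_k d*)`; these are `*`-squares of elements
of `E`, so they commute with `E` and with each other. Take
`Y = X k₀ · ∏_{k < m} X k` and `r = Y (1 - w m) ⋯ (1 - w (n-1))`. Then `r` fixes every `f d*`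
with `f` as in the statement, is fixed by `w k` for `k < m`, and kills `d a_k*` for `k ≥ m`.
Because `‖b_k d*‖ ≤ 1`, each factor `1 - w` can only decrease squares of self-adjoint elements
commuting with `w`, so `0 ≤ r² ≤ Y² = Y* Y`; as `r²` lies in the ring generated by the
`*`-squares of `E`, hence in `L`, heredity gives `p = r² ∈ S`. The trapping element is then
`c = e d` with `e = p* p ∈ E`.
-/

local notation "Σ⁺" => starSums (Set.univ : Set A)

lemma mul_star_mem_starSums (g : A) : g * star g ∈ Σ⁺ :=
  ⟨0, fun _ => g, fun _ => trivial, by simp⟩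

lemma add_mem_starSums {x y : A} (hx : x ∈ Σ⁺) (hy : y ∈ Σ⁺) : x + y ∈ Σ⁺ := by
  obtain ⟨k, f, -, rfl⟩ := hx
  obtain ⟨l, g, -, rfl⟩ := hy
  refine ⟨k + 1 + l, (Fin.append f g : Fin (k + 1 + (l + 1)) → A), fun _ => trivial, ?_⟩
  have h := Fin.sum_univ_add fun i => Fin.append f g i * star (Fin.append f g i)
  simp only [Fin.append_left, Fin.append_right] at h
  exact h.symm

lemma nsmul_mem_starSums {x : A} (hx : x ∈ Σ⁺) {k : ℕ} (hk : 0 < k) : k • x ∈ Σ⁺ := by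
  induction k, hk using Nat.le_induction with
  | base => simpa using hx
  | succ k _ ih => rw [succ_nsmul]; exact add_mem_starSums ih hx

lemma add_nsmul_mem_starSums {x y : A} (hx : x ∈ Σ⁺) (hy : y ∈ Σ⁺) (k : ℕ) :
    x + k • y ∈ Σ⁺ := by
  rcases k.eq_zero_or_pos with rfl | hk
  · simpa using hx
  · exact add_mem_starSums hx (nsmul_mem_starSums hy hk)

lemma natCast_div_lt_natCast_div_iff {m n p q : ℕ} (hn : n ≠ 0) :
    (m : ℝ≥0∞) / n < (p : ℝ≥0∞) / q ↔ m * q < p * n := by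
  rw [ENNReal.div_lt_iff (Or.inl (by simpa using hn)) (by simp), div_eq_mul_inv, mul_right_comm,
    ← div_eq_mul_inv, ENNReal.lt_div_iff_mul_lt (by simp) (by simp)]
  norm_cast

lemma exists_starSums_of_ceil'_lt {x : A} {r : ℝ≥0∞} (h : ceil' x < r) (b : A) :
    ∃ m n : ℕ, 0 < m ∧ 0 < n ∧ (m : ℝ≥0∞) / n < r ∧
      m • (b * star b) - n • (b * x * star b) ∈ Σ⁺ := by
  obtain ⟨_, ⟨m, n, hm, hn, rfl, hmem⟩, hlt⟩ := sInf_lt_iff.mp ((le_iSup _ b).trans_lt h)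
  exact ⟨m, n, hm, hn, hlt, hmem⟩

lemma ceil'_eq_zero_iff {x : A} : ceil' x = 0 ↔ ∀ b : A, ∀ j : ℕ, 0 < j → ∃ m n : ℕ,
    0 < m ∧ 0 < n ∧ m * j < n ∧ m • (b * star b) - n • (b * x * star b) ∈ Σ⁺ := by
  constructor
  · intro h b j hj
    obtain ⟨m, n, hm, hn, hlt, hmem⟩ :=
      exists_starSums_of_ceil'_lt (x := x) (r := ((1 : ℕ) : ℝ≥0∞) / j) (by simp [h]) b
    exact ⟨m, n, hm, hn, by simpa using (natCast_div_lt_natCast_div_iff hn.ne').mp hlt, hmem⟩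
  · intro h
    refine ENNReal.iSup_eq_zero.mpr fun b => ?_
    refine le_antisymm (le_of_forall_gt_imp_ge_of_dense fun ε hε => ?_) zero_le
    obtain ⟨j, hj⟩ := ENNReal.exists_inv_nat_lt hε.ne'
    obtain ⟨m, n, hm, hn, hlt, hmem⟩ := h b (j + 1) j.succ_pos
    calc _ ≤ (m : ℝ≥0∞) / n := by exact sInf_le ⟨m, n, hm, hn, rfl, hmem⟩
      _ ≤ ((1 : ℕ) : ℝ≥0∞) / (j + 1 : ℕ) :=
        ((natCast_div_lt_natCast_div_iff hn.ne').mpr (by simpa using hlt)).le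
      _ ≤ (j : ℝ≥0∞)⁻¹ := by simp [one_div]
      _ ≤ ε := hj.le

lemma ceil'_add_eq_zero {x y : A} (hx : ceil' x = 0) (hy : ceil' y = 0) :
    ceil' (x + y) = 0 := by
  rw [ceil'_eq_zero_iff] at hx hy ⊢
  intro b j hj
  obtain ⟨m₁, n₁, hm₁, hn₁, hlt₁, hmem₁⟩ := hx b (2 * j) (by omega)
  obtain ⟨m₂, n₂, hm₂, hn₂, hlt₂, hmem₂⟩ := hy b (2 * j) (by omega)
  refine ⟨n₂ * m₁ + n₁ * m₂, n₁ * n₂, by positivity, by positivity, by nlinarith, ?_⟩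
  have h : (n₂ * m₁ + n₁ * m₂) • (b * star b) - (n₁ * n₂) • (b * (x + y) * star b) =
      n₂ • (m₁ • (b * star b) - n₁ • (b * x * star b)) +
        n₁ • (m₂ • (b * star b) - n₂ • (b * y * star b)) := by
    rw [mul_add, add_mul]
    module
  rw [h]
  exact add_mem_starSums (nsmul_mem_starSums hmem₁ hn₂) (nsmul_mem_starSums hmem₂ hn₁)

lemma ceil'_neg_mul_star_eq_zero (x : A) : ceil' (-(x * star x)) = 0 := by
  refine ceil'_eq_zero_iff.mpr fun b j _ => ⟨1, j + 1, one_pos, j.succ_pos, by simp, ?_⟩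
  have h : b * -(x * star x) * star b = -((b * x) * star (b * x)) := by
    simp only [mul_neg, neg_mul, star_mul, mul_assoc]
  rw [h, smul_neg, sub_neg_eq_add, one_smul]
  exact add_nsmul_mem_starSums (mul_star_mem_starSums b) (mul_star_mem_starSums _) _

lemma cle_refl (x : A) : cle x x := by
  simpa [cle] using ceil'_neg_mul_star_eq_zero (0 : A)

lemma cle_trans {x y z : A} (hxy : cle x y) (hyz : cle y z) : cle x z := by
  simpa [cle] using ceil'_add_eq_zero hxy hyz

lemma ceil'_star_mul_self_le_one {x : A} (h : rnorm' x ≤ 1) : ceil' (star x * x) ≤ 1 := by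
  have h2 := ENNReal.rpow_le_rpow h (by norm_num : (0 : ℝ) ≤ 2)
  rw [rnorm', ← ENNReal.rpow_mul, ENNReal.one_rpow] at h2
  norm_num at h2
  exact h2.2

/- `ceil' w ≤ 1` only yields certificates with `m / n < 2`, whence the factor `2`. -/
lemma cle_conj_two_nsmul {w : A} (hw : ceil' w ≤ 1) (τ : A) :
    cle (τ * w * star τ) (2 • (τ * star τ)) := by
  refine ceil'_eq_zero_iff.mpr fun b j _ => ?_
  have h2 : ceil' w < ((2 : ℕ) : ℝ≥0∞) / (1 : ℕ) := hw.trans_lt (by norm_num)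
  obtain ⟨m, n, -, hn, hlt, hmem⟩ := exists_starSums_of_ceil'_lt h2 (b * τ)
  rw [natCast_div_lt_natCast_div_iff hn.ne'] at hlt
  obtain ⟨k, hk⟩ : ∃ k, 2 * n = m + k := ⟨2 * n - m, by omega⟩
  refine ⟨1, (j + 1) * n, one_pos, by positivity, by nlinarith, ?_⟩
  set c := b * τ
  have hc : b * (τ * w * star τ - 2 • (τ * star τ)) * star b =
      c * w * star c - 2 • (c * star c) := by
    simp only [c, mul_sub, sub_mul, mul_smul_comm, smul_mul_assoc, star_mul, mul_assoc]
  have h : 1 • (b * star b) - ((j + 1) * n) • (c * w * star c - 2 • (c * star c)) =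
      (b * star b + ((j + 1) * k) • (c * star c)) +
        (j + 1) • (m • (c * star c) - n • (c * w * star c)) := by
    rw [smul_sub, smul_smul, show (j + 1) * n * 2 = (j + 1) * (m + k) by rw [← hk]; ring]
    module
  rw [hc, h]
  exact add_mem_starSums
    (add_nsmul_mem_starSums (mul_star_mem_starSums b) (mul_star_mem_starSums c) _)
    (nsmul_mem_starSums hmem j.succ_pos)

/- With `τ = x u*`, the difference of the two sides is `τ w τ* - 2 τ τ*`. -/
lemma cle_sub_mul_mul_self {x u : A} (hx : star x = x) (hxu : Commute x (star u * u))
    (hu : Commute (star u) (star u * u)) (hw : ceil' (star u * u) ≤ 1) :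
    cle ((x - x * (star u * u)) * (x - x * (star u * u))) (x * x) := by
  set w := star u * u
  have hstar : star (x * star u) = u * x := by rw [star_mul, star_star, hx]
  have hτ : x * star u * star (x * star u) = x * w * x := by
    simp only [hstar, w, mul_assoc]
  have hτw : x * star u * w * star (x * star u) = x * w * w * x := by
    rw [hstar, mul_assoc x, hu.eq]
    simp only [w, mul_assoc]
  have h := cle_conj_two_nsmul hw (x * star u)
  rw [hτ, hτw] at h
  unfold cle at h ⊢
  convert h using 2
  have hwx : w * x = x * w := hxu.eq.symm
  simp only [sub_mul, mul_sub, two_nsmul, mul_assoc, hwx]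
  abel

section NonUnitalRing

variable {R : Type*} [NonUnitalRing R]

lemma mul_mul_eq_self_of_eq {x y z : R} (h : x = x * y * z) : x * (y * z) = x := by
  rw [← mul_assoc, ← h]

lemma mul_mul_mul_eq_mul_of_eq {x y z : R} (h : x = x * y * z) (w : R) :
    x * (y * (z * w)) = x * w := by
  rw [← mul_assoc, ← mul_assoc, ← h]

def mulProd (x : R) (l : List R) : R := l.foldl (· * ·) x

def mulProdOneSub (x : R) (ws : List R) : R := ws.foldl (fun y w => y - y * w) x

lemma mulProd_mem {s : Set R} {x : R} {l : List R} (hs : ∀ z ∈ s, ∀ y ∈ l, z * y ∈ s)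
    (hx : x ∈ s) : mulProd x l ∈ s :=
  List.foldlRecOn (motive := (· ∈ s)) l _ hx fun z hz y hy => hs z hz y hy

lemma mulProdOneSub_mem {s : Set R} {x : R} {ws : List R}
    (hs : ∀ z ∈ s, ∀ w ∈ ws, z - z * w ∈ s) (hx : x ∈ s) : mulProdOneSub x ws ∈ s :=
  List.foldlRecOn (motive := (· ∈ s)) ws _ hx fun z hz w hw => hs z hz w hw

lemma mul_mulProd {g x : R} {l : List R} (hx : g * x = g) (hl : ∀ y ∈ l, g * y = g) :
    g * mulProd x l = g :=
  List.foldlRecOn (motive := (g * · = g)) l _ hx fun z hz y hy => by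
    rw [← mul_assoc, hz, hl y hy]

lemma mul_mulProdOneSub {g x : R} {ws : List R} (hx : g * x = g) (hws : ∀ w ∈ ws, g * w = 0) :
    g * mulProdOneSub x ws = g :=
  List.foldlRecOn (motive := (g * · = g)) ws _ hx fun z hz w hw => by
    rw [mul_sub, ← mul_assoc, hz, hws w hw, sub_zero]

lemma mulProd_mul_of_mul_eq {x v : R} {l : List R} (hl : ∀ y ∈ l, Commute y v)
    (hx : x * v = x) : mulProd x l * v = mulProd x l :=
  List.foldlRecOn (motive := fun z => z * v = z) l _ hx fun z hz y hy => by
    rw [mul_assoc, (hl y hy).eq, ← mul_assoc, hz]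

lemma mulProd_mul_of_mem {x y v : R} {l : List R} (hl : ∀ y ∈ l, Commute y v) (hy : y ∈ l)
    (hyv : y * v = y) : mulProd x l * v = mulProd x l := by
  induction l generalizing x with
  | nil => simp at hy
  | cons y' l ih =>
    simp only [List.mem_cons, forall_eq_or_imp] at hy hl
    change mulProd (x * y') l * v = mulProd (x * y') l
    rcases hy with rfl | hy
    · exact mulProd_mul_of_mul_eq hl.2 (by rw [mul_assoc, hyv])
    · exact ih hl.2 hy

lemma mulProdOneSub_sub (x y : R) (ws : List R) :
    mulProdOneSub (x - y) ws = mulProdOneSub x ws - mulProdOneSub y ws := by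
  induction ws generalizing x y with
  | nil => rfl
  | cons w ws ih =>
    simp only [mulProdOneSub, List.foldl_cons] at ih ⊢
    rw [← ih, sub_mul, sub_sub_sub_comm]

lemma mulProdOneSub_mul {x v : R} {ws : List R} (hws : ∀ w ∈ ws, Commute v w) :
    mulProdOneSub x ws * v = mulProdOneSub (x * v) ws := by
  induction ws generalizing x with
  | nil => rfl
  | cons w ws ih =>
    simp only [List.mem_cons, forall_eq_or_imp] at hws
    simp only [mulProdOneSub, List.foldl_cons] at ih ⊢
    rw [ih hws.2, sub_mul, mul_assoc x w v, ← hws.1.eq, ← mul_assoc]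

lemma mulProdOneSub_mul_eq_zero {x w v : R} {ws : List R} (hw : w ∈ ws)
    (hws : ∀ w' ∈ ws, Commute w w') (hwv : w * v = v) : mulProdOneSub x ws * v = 0 := by
  induction ws generalizing x with
  | nil => simp at hw
  | cons w' ws ih =>
    simp only [List.mem_cons, forall_eq_or_imp] at hw hws
    rcases hw with rfl | hw
    · change mulProdOneSub (x - x * w) ws * v = 0
      rw [mulProdOneSub_sub, ← mulProdOneSub_mul hws.2, sub_mul, mul_assoc, hwv, sub_self]
    · exact ih hw hws.2

/- `r` behaves like the projection onto the common support of the `X k`, `k < m`, with the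
supports of the `w k`, `k ≥ m`, removed. -/
structure IsSeparating {n : ℕ} (X w : Fin n → R) (m : ℕ) (r : R) : Prop where
  mul_eq_left : ∀ g, (∀ k : Fin n, (k : ℕ) < m → g * X k = g) →
    (∀ k : Fin n, m ≤ (k : ℕ) → g * w k = 0) → g * r = g
  mul_eq_self : ∀ k : Fin n, (k : ℕ) < m → r * w k = r
  mul_eq_zero : ∀ k : Fin n, m ≤ (k : ℕ) → ∀ z, w k * z = z → r * z = 0

lemma IsSeparating.mul {n m : ℕ} {X w : Fin n → R} {r s : R}
    (hr : IsSeparating X w m r) (hs : IsSeparating X w m s) : IsSeparating X w m (r * s) where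
  mul_eq_left g hX hw := by rw [← mul_assoc, hr.mul_eq_left g hX hw, hs.mul_eq_left g hX hw]
  mul_eq_self k hk := by rw [mul_assoc, hs.mul_eq_self k hk]
  mul_eq_zero k hk z hz := by rw [mul_assoc, hs.mul_eq_zero k hk z hz, mul_zero]

end NonUnitalRing

lemma Sdom.trans {E : Set A} (hE : ∀ x ∈ E, ∀ y ∈ E, x * y ∈ E) {x y z : A}
    (hxy : Sdom E x y) (hyz : Sdom E y z) : Sdom E x z := by
  have h : x * star z = x * star y * (y * star z) := by
    conv_lhs => rw [hxy.2]
    simp only [mul_assoc]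
  refine ⟨h ▸ hE _ hxy.1 _ hyz.1, ?_⟩
  rw [h, mul_assoc _ (y * star z), ← hyz.2, ← hxy.2]

lemma mul_star_mul_conj {f a d : A} (hfa : f = f * star a * a) (had : a = a * star d * d) :
    f * star d * (star (a * star d) * (a * star d)) = f * star d := by
  have hfd : f = f * star d * d := calc
    f = f * star a * (a * star d * d) := by rw [← had, ← hfa]
    _ = f * star a * a * star d * d := by simp only [mul_assoc]
    _ = f * star d * d := by rw [← hfa]
  simp only [star_mul, star_star, mul_assoc, mul_mul_mul_eq_mul_of_eq hfd,
    mul_mul_mul_eq_mul_of_eq hfa]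

lemma mul_star_mul_conj_eq_zero {f b d : A} (hfd : f = f * star d * d) (hfb : f * star b = 0) :
    f * star d * (star (b * star d) * (b * star d)) = 0 := by
  simp only [star_mul, star_star, mul_assoc, mul_mul_mul_eq_mul_of_eq hfd, ← mul_assoc f, hfb,
    zero_mul]

lemma conj_mul_mul_star {a b d : A} (hab : a = a * star b * b) (hbd : b = b * star d * d) :
    star (b * star d) * (b * star d) * (d * star a) = d * star a := by
  have h : star a = star b * (b * star a) := by
    simpa only [star_mul, star_star, mul_assoc] using congrArg star hab
  simp only [star_mul, star_star, mul_assoc, mul_mul_mul_eq_mul_of_eq hbd, ← h]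

lemma sdom_mul_of_mul_eq {E : Set A} (hE : ∀ x ∈ E, ∀ y ∈ E, x * y ∈ E) {e f d : A}
    (he : e ∈ E) (hes : star e = e) (hfd : Sdom E f d) (hfe : f * star d * e = f * star d) :
    Sdom E f (e * d) := by
  have h : f * star (e * d) = f * star d * e := by rw [star_mul, hes, mul_assoc]
  refine ⟨h ▸ hE _ hfd.1 _ he, ?_⟩
  rw [h, ← mul_assoc, hfe, hfe, ← hfd.2]

lemma mul_sdom_of_mul_eq {E : Set A} (hE : ∀ x ∈ E, ∀ y ∈ E, x * y ∈ E) {e b d : A}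
    (he : e ∈ E) (hdb : d * star b ∈ E) (hbd : b = b * star d * d)
    (heb : e * (star (b * star d) * (b * star d)) = e) : Sdom E (e * d) b := by
  refine ⟨by rw [mul_assoc]; exact hE _ he _ hdb, ?_⟩
  conv_lhs => rw [← heb]
  simp only [star_mul, star_star, mul_assoc, mul_mul_eq_self_of_eq hbd]

def starSquares (E : Set A) : Set A := {x | ∃ t ∈ E, star t * t = x}

namespace Ass5

variable {S E : Set A}

lemma star_mem (h5 : Ass5 S E) {e : A} (he : e ∈ E) : star e ∈ E :=
  h5.starE ▸ ⟨e, he, rfl⟩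

lemma commute_of_mem_starSquares (h5 : Ass5 S E) {x e : A} (hx : x ∈ starSquares E)
    (he : e ∈ E) : Commute x e := by
  obtain ⟨t, ht, rfl⟩ := hx
  exact h5.central t (h5.ES ht) e he

lemma starSquares_subset (h5 : Ass5 S E) : starSquares E ⊆ E := by
  rintro _ ⟨t, ht, rfl⟩
  exact h5.mulE _ (h5.star_mem ht) _ ht

lemma mul_mem_starSquares (h5 : Ass5 S E) {x y : A} (hx : x ∈ starSquares E)
    (hy : y ∈ starSquares E) : x * y ∈ starSquares E := by
  obtain ⟨t, ht, rfl⟩ := hx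
  obtain ⟨u, hu, rfl⟩ := hy
  refine ⟨u * t, h5.mulE _ hu _ ht, ?_⟩
  rw [star_mul, mul_assoc, ← mul_assoc (star u), h5.central u (h5.ES hu) t ht, ← mul_assoc,
    ← mul_assoc]

lemma mem_of_mem_closure (h5 : Ass5 S E) {G : AddSubgroup A} (hG : starSquares E ⊆ G) {x : A}
    (hx : x ∈ NonUnitalSubring.closure (starSquares E)) : x ∈ G := by
  have hM : (Subsemigroup.closure (starSquares E) : Set A) ⊆ starSquares E :=
    Subsemigroup.closure_le (S := ⟨starSquares E, h5.mul_mem_starSquares⟩).mpr subset_rfl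
  exact (AddSubgroup.closure_le G).mpr (hM.trans hG) (NonUnitalSubring.mem_closure_iff.mp hx)

lemma isSelfAdjoint_of_mem_closure (h5 : Ass5 S E) {x : A}
    (hx : x ∈ NonUnitalSubring.closure (starSquares E)) : IsSelfAdjoint x :=
  h5.mem_of_mem_closure (G := selfAdjoint A)
    (by rintro _ ⟨t, -, rfl⟩; exact .star_mul_self t) hx

lemma commute_of_mem_closure (h5 : Ass5 S E) {x e : A}
    (hx : x ∈ NonUnitalSubring.closure (starSquares E)) (he : e ∈ E) : Commute x e := by
  have hG : starSquares E ⊆ (NonUnitalSubring.centralizer E).toAddSubgroup := fun y hy =>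
    NonUnitalSubring.mem_centralizer_iff.mpr fun e he => (h5.commute_of_mem_starSquares hy he).symm
  exact (NonUnitalSubring.mem_centralizer_iff.mp (h5.mem_of_mem_closure hG hx) e he).symm

lemma closure_starSquares_subset (h5 : Ass5 S E) {L : Set A} (hL0 : (0 : A) ∈ L)
    (hLsub : ∀ x ∈ L, ∀ y ∈ L, x - y ∈ L) (hLsq : ∀ s ∈ S, star s * s ∈ L) :
    (NonUnitalSubring.closure (starSquares E) : Set A) ⊆ L := fun _ hx =>
  h5.mem_of_mem_closure
    (G := .ofSub L ⟨0, hL0⟩ fun x hx y hy => sub_eq_add_neg x y ▸ hLsub x hx y hy)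
    (by rintro _ ⟨t, ht, rfl⟩; exact hLsq t (h5.ES ht)) hx

lemma cle_mulProdOneSub (h5 : Ass5 S E) {x : A}
    (hx : x ∈ NonUnitalSubring.closure (starSquares E)) {ws : List A}
    (hws : ∀ w ∈ ws, w ∈ starSquares E) :
    cle (mulProdOneSub x ws * mulProdOneSub x ws) (x * x) := by
  induction ws generalizing x with
  | nil => exact cle_refl _
  | cons w ws ih =>
    simp only [List.mem_cons, forall_eq_or_imp] at hws
    obtain ⟨⟨u, hu, rfl⟩, hws⟩ := hws
    have hw : star u * u ∈ NonUnitalSubring.closure (starSquares E) :=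
      NonUnitalSubring.subset_closure ⟨u, hu, rfl⟩
    refine cle_trans (ih (sub_mem hx (mul_mem hx hw)) hws) (cle_sub_mul_mul_self
      (h5.isSelfAdjoint_of_mem_closure hx)
      (h5.commute_of_mem_closure hx (h5.starSquares_subset ⟨u, hu, rfl⟩))
      (h5.commute_of_mem_starSquares ⟨u, hu, rfl⟩ (h5.star_mem hu)).symm
      (ceil'_star_mul_self_le_one (h5.ball u (h5.ES hu))))

lemma exists_isSeparating (h5 : Ass5 S E) {n m : ℕ} (X u : Fin n → A)
    (hX : ∀ k, X k ∈ starSquares E) (hu : ∀ k, u k ∈ E)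
    (hXu : ∀ k, X k * (star (u k) * u k) = X k) {k₀ : Fin n} (hk₀ : (k₀ : ℕ) < m) :
    ∃ Y ∈ starSquares E, ∃ r ∈ NonUnitalSubring.closure (starSquares E),
      cle (r * r) (Y * Y) ∧ IsSeparating X (fun k => star (u k) * u k) m r := by
  set w := fun k => star (u k) * u k
  set Xs := ((List.finRange n).filter fun k : Fin n => (k : ℕ) < m).map X
  set ws := ((List.finRange n).filter fun k : Fin n => m ≤ (k : ℕ)).map w
  have hw : ∀ k, w k ∈ starSquares E := fun k => ⟨u k, hu k, rfl⟩
  have hws : ∀ w' ∈ ws, w' ∈ starSquares E := by simp [ws, hw]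
  have hcomm : ∀ k, ∀ w' ∈ ws, Commute (w k) w' := fun k w' hw' =>
    h5.commute_of_mem_starSquares (hw k) (h5.starSquares_subset (hws w' hw'))
  have hXs : ∀ y ∈ Xs, y ∈ starSquares E := by simp [Xs, hX]
  set Y := mulProd (X k₀) Xs
  have hY : Y ∈ starSquares E :=
    mulProd_mem (fun z hz y hy => h5.mul_mem_starSquares hz (hXs y hy)) (hX k₀)
  have hYcl := NonUnitalSubring.subset_closure hY
  refine ⟨Y, hY, mulProdOneSub Y ws, mulProdOneSub_mem (fun z hz w' hw' =>
      sub_mem hz (mul_mem hz (NonUnitalSubring.subset_closure (hws w' hw')))) hYcl,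
    h5.cle_mulProdOneSub hYcl hws, ⟨fun g hgX hgw => ?_, fun k hk => ?_, fun k hk z hz => ?_⟩⟩
  · exact mul_mulProdOneSub (mul_mulProd (hgX k₀ hk₀) (by simpa [Xs] using hgX))
      (by simpa [ws] using hgw)
  · have hXw : ∀ y ∈ Xs, Commute y (w k) := fun y hy =>
      h5.commute_of_mem_starSquares (hXs y hy) (h5.starSquares_subset (hw k))
    rw [mulProdOneSub_mul (hcomm k),
      mulProd_mul_of_mem hXw (by simpa [Xs] using ⟨k, hk, rfl⟩) (hXu k)]
  · exact mulProdOneSub_mul_eq_zero (by simpa [ws] using ⟨k, hk, rfl⟩) (hcomm k) hz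

lemma exists_selfAdjoint_isSeparating (h5 : Ass5 S E) {L : Set A} (hL0 : (0 : A) ∈ L)
    (hLsub : ∀ x ∈ L, ∀ y ∈ L, x - y ∈ L) (hLsq : ∀ s ∈ S, star s * s ∈ L)
    (hLher : ∀ p ∈ L, ceil' (-p) = 0 → (∃ s ∈ S, cle p (star s * s)) → p ∈ S)
    {n m : ℕ} (X u : Fin n → A) (hX : ∀ k, X k ∈ starSquares E) (hu : ∀ k, u k ∈ E)
    (hXu : ∀ k, X k * (star (u k) * u k) = X k) {k₀ : Fin n} (hk₀ : (k₀ : ℕ) < m) :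
    ∃ e ∈ E, star e = e ∧ IsSeparating X (fun k => star (u k) * u k) m e := by
  obtain ⟨Y, hY, r, hr, hrY, hsep⟩ := h5.exists_isSeparating X u hX hu hXu hk₀
  have hrs : star r = r := h5.isSelfAdjoint_of_mem_closure hr
  have hYs : star Y = Y := h5.isSelfAdjoint_of_mem_closure (NonUnitalSubring.subset_closure hY)
  have hp : r * r ∈ S := by
    refine hLher _ (h5.closure_starSquares_subset hL0 hLsub hLsq (mul_mem hr hr)) ?_
      ⟨Y, h5.ES (h5.starSquares_subset hY), by rwa [hYs]⟩
    simpa [hrs] using ceil'_neg_mul_star_eq_zero r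
  refine ⟨star (r * r) * (r * r), h5.sqE _ hp, by simp [star_mul], ?_⟩
  rw [star_mul, hrs]
  exact (hsep.mul hsep).mul (hsep.mul hsep)

end Ass5

theorem stmt15_general (S E L : Set A) (h5 : Ass5 S E)
    (hL0 : (0 : A) ∈ L) (hLsub : ∀ x ∈ L, ∀ y ∈ L, x - y ∈ L)
    (hLsq : ∀ s ∈ S, star s * s ∈ L)
    (hLher : ∀ p ∈ L, ceil' (-p) = 0 → (∃ s ∈ S, cle p (star s * s)) → p ∈ S)
    (n : ℕ) (d : A) (hd : d ∈ S) (b a : Fin n → A)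
    (hbd : ∀ k, Sdom E (b k) d) (hab : ∀ k, Sdom E (a k) (b k))
    (m : ℕ) (hm1 : 1 ≤ m) (hmn : m ≤ n) :
    ∃ c ∈ S,
      (∀ f ∈ S, (∀ k : Fin n, (k : ℕ) < m → Sdom E f (a k)) →
        (∀ k : Fin n, m ≤ (k : ℕ) → f * star (b k) = 0) → Sdom E f c) ∧
      (∀ k : Fin n, (k : ℕ) < m → Sdom E c (b k)) ∧
      (∀ k : Fin n, m ≤ (k : ℕ) → c * star (a k) = 0) := by
  have had : ∀ k, Sdom E (a k) d := fun k => (hab k).trans h5.mulE (hbd k)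
  let k₀ : Fin n := ⟨0, by omega⟩
  obtain ⟨e, he, hes, hsep⟩ := h5.exists_selfAdjoint_isSeparating hL0 hLsub hLsq hLher
    (fun k => star (a k * star d) * (a k * star d)) (fun k => b k * star d)
    (fun k => ⟨_, (had k).1, rfl⟩) (fun k => (hbd k).1)
    (fun k => by rw [mul_assoc, mul_star_mul_conj (hab k).2 (hbd k).2]) (k₀ := k₀) hm1
  refine ⟨e * d, h5.mulS _ (h5.ES he) _ hd, fun f _ hfa hfb => ?_, fun k hk => ?_,
    fun k hk => ?_⟩
  · have hfd : Sdom E f d := (hfa k₀ hm1).trans h5.mulE (had k₀)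
    exact sdom_mul_of_mul_eq h5.mulE he hes hfd <| hsep.mul_eq_left _
      (fun k hk => mul_star_mul_conj (hfa k hk).2 (had k).2)
      (fun k hk => mul_star_mul_conj_eq_zero hfd.2 (hfb k hk))
  · refine mul_sdom_of_mul_eq h5.mulE he ?_ (hbd k).2 (hsep.mul_eq_self k hk)
    simpa using h5.star_mem (hbd k).1
  · rw [mul_assoc]
    exact hsep.mul_eq_zero k hk _ (conj_mul_mul_star (hab k).2 (hbd k).2)

/-- Corollary 3.19: trapping between finitely many elements bounded by `d ∈ S`,
given an `S`-hereditary additive subgroup `L`. -/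
theorem stmt15 (S E L : Set A) (h5 : Ass5 S E)
    (hL0 : (0 : A) ∈ L) (hLsub : ∀ x ∈ L, ∀ y ∈ L, x - y ∈ L)
    (hLsq : ∀ s ∈ S, star s * s ∈ L)
    (hLher : ∀ p ∈ L, ceil' (-p) = 0 → (∃ s ∈ S, cle p (star s * s)) → p ∈ S)
    (n : ℕ) (d : A) (hd : d ∈ S) (b a : Fin n → A)
    (hbS : ∀ k, b k ∈ S) (haS : ∀ k, a k ∈ S)
    (hbd : ∀ k, Sdom E (b k) d) (hab : ∀ k, Sdom E (a k) (b k))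
    (m : ℕ) (hm1 : 1 ≤ m) (hmn : m ≤ n) :
    ∃ c ∈ S,
      (∀ f ∈ S, (∀ k : Fin n, (k : ℕ) < m → Sdom E f (a k)) →
        (∀ k : Fin n, m ≤ (k : ℕ) → f * star (b k) = 0) → Sdom E f c) ∧
      (∀ k : Fin n, (k : ℕ) < m → Sdom E c (b k)) ∧
      (∀ k : Fin n, m ≤ (k : ℕ) → c * star (a k) = 0) :=
  stmt15_general S E L h5 hL0 hLsub hLsq hLher n d hd b a hbd hab m hm1 hmn
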